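/- Intuitionistic Determinacy Theorem, weak I-determinacy of arbitrary sets (Theorem 9.6(iii), classically valid form): let X be a set of elements of ℕ → ℕ and suppose there exists a continuous φ : (List ℕ → Bool) → (ℕ → ℕ) such that for every τ : List ℕ → Bool, φ τ lies in (ω×2)^ω, φ τ II-obeys τ, and φ τ ∈ X. Then there exists σ : List ℕ → ℕ such that every δ in (ω×2)^ω that I-obeys σ lies in X. -/

import Mathlib

/-- The first `n` values of `δ` as a list. -/
def segN (δ : ℕ → ℕ) (n : ℕ) : List ℕ := List.ofFn fun i : Fin n => δ i

/-- `δ` is a member of `(ω×2)^ω`: at odd indices only bits are played. -/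
def MemOmegaTwo (δ : ℕ → ℕ) : Prop := ∀ n, δ (2 * n + 1) ≤ 1

/-- `δ` I-obeys the strategy `σ` for player I. -/
def ObeysI (δ : ℕ → ℕ) (σ : List ℕ → ℕ) : Prop :=
  ∀ n, δ (2 * n) = σ (segN δ (2 * n))

/-- `δ` II-obeys the strategy `τ` for player II. -/
def ObeysII (δ : ℕ → ℕ) (τ : List ℕ → Bool) : Prop :=
  ∀ n, δ (2 * n + 1) = if τ (segN δ (2 * n + 1)) then 1 else 0

/-!
Call a position `p` reachable by `φ` if, whatever a strategy `τ` of II prescribes at extensions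
of `p`, some `τ'` agreeing with `τ` there makes `φ τ'` pass through `p`. From a reachable
even-length position I has a move `m` after which both answers of II are reachable again:
otherwise II answers every `m` with a bad bit `bₘ` and continues with a witness `τₘ` of
non-reachability, and gluing these into one strategy refutes reachability of `p`, since `φ τ'`
obeys `τ'` and hence answers its own move `m` with `bₘ`. So I can stay in reachable positions
forever; every such play lies in the closure of `range φ`, which is closed because `φ` is
continuous on the compact space `List ℕ → Bool`.
-/

open PiNat

lemma MemOmegaTwo.exists_bool {δ : ℕ → ℕ} (hδ : MemOmegaTwo δ) (n : ℕ) :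
    ∃ b : Bool, δ (2 * n + 1) = b.toNat := by
  rcases Nat.le_one_iff_eq_zero_or_eq_one.mp (hδ n) with h | h
  exacts [⟨false, h⟩, ⟨true, h⟩]

@[simp]
lemma length_segN (δ : ℕ → ℕ) (n : ℕ) : (segN δ n).length = n :=
  List.length_ofFn

lemma segN_succ (δ : ℕ → ℕ) (n : ℕ) : segN δ (n + 1) = segN δ n ++ [δ n] := by
  simp only [segN, List.ofFn_succ', List.concat_eq_append]
  rfl

lemma segN_add_two (δ : ℕ → ℕ) (n : ℕ) :
    segN δ (n + 2) = segN δ n ++ [δ n, δ (n + 1)] := by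
  rw [segN_succ, segN_succ, List.append_assoc]
  rfl

lemma segN_eq_segN_iff_mem_cylinder {δ δ' : ℕ → ℕ} {n : ℕ} :
    segN δ' n = segN δ n ↔ δ' ∈ cylinder δ n := by
  simp only [segN, List.ofFn_inj, funext_iff, Fin.forall_iff, mem_cylinder_iff]

lemma PiNat.mem_closure_iff_forall_cylinder {E : ℕ → Type*} [∀ n, TopologicalSpace (E n)]
    [∀ n, DiscreteTopology (E n)] {s : Set (∀ n, E n)} {x : ∀ n, E n} :
    x ∈ closure s ↔ ∀ n, (cylinder x n ∩ s).Nonempty := by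
  rw [(isTopologicalBasis_cylinders E).mem_closure_iff]
  constructor
  · exact fun h n => h _ ⟨x, n, rfl⟩ (self_mem_cylinder x n)
  · rintro h _ ⟨y, n, rfl⟩ hx
    rw [← mem_cylinder_iff_eq.mp hx]
    exact h n

namespace WeakIDeterminacy

variable {φ : (List ℕ → Bool) → ℕ → ℕ}

def Reachable (φ : (List ℕ → Bool) → ℕ → ℕ) (p : List ℕ) : Prop :=
  ∀ τ : List ℕ → Bool, ∃ τ' : List ℕ → Bool,
    (∀ q, p <+: q → τ' q = τ q) ∧ segN (φ τ') p.length = p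

lemma Reachable.exists_segN_eq {p : List ℕ} (h : Reachable φ p) :
    ∃ τ, segN (φ τ) p.length = p :=
  (h fun _ => false).imp fun _ => And.right

lemma Reachable.exists_move (hφ : ∀ τ, ObeysII (φ τ) τ) {p : List ℕ} (hp : Even p.length)
    (h : Reachable φ p) : ∃ m, ∀ b : Bool, Reachable φ (p ++ [m, b.toNat]) := by
  by_contra! hbad
  choose b hb using hbad
  simp only [Reachable, not_forall, not_exists, not_and] at hb
  choose τ hτ using hb
  let glued : List ℕ → Bool := fun q =>
    let m := q.getD p.length 0
    if q = p ++ [m] then b m else τ m q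
  obtain ⟨τ', hagree, hseg⟩ := h glued
  set m := φ τ' p.length
  obtain ⟨k, hk⟩ : ∃ k, p.length = 2 * k := hp.exists_two_nsmul _
  have hbit : φ τ' (p.length + 1) = (b m).toNat := by
    have hprefix : segN (φ τ') (p.length + 1) = p ++ [m] := by rw [segN_succ, hseg]
    have hobey := hφ τ' k
    rw [← hk, hprefix, hagree _ (List.prefix_append _ _)] at hobey
    rw [hobey, Bool.toNat]
    simp [glued]
  refine hτ m τ' (fun q hq => ?_) ?_
  · obtain ⟨r, rfl⟩ := hq
    rw [hagree _ ((List.prefix_append _ _).trans (List.prefix_append _ _))]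
    simp [glued, List.getD_eq_getElem?_getD]
  · simp only [List.length_append, List.length_cons, List.length_nil]
    rw [segN_add_two, hseg, hbit]

open Classical in
noncomputable def reachingStrategy (φ : (List ℕ → Bool) → ℕ → ℕ) (p : List ℕ) : ℕ :=
  if h : ∃ m, ∀ b : Bool, Reachable φ (p ++ [m, b.toNat]) then h.choose else 0

lemma reachable_segN_of_obeysI (hφ : ∀ τ, ObeysII (φ τ) τ) {δ : ℕ → ℕ} (hδ : MemOmegaTwo δ)
    (hσ : ObeysI δ (reachingStrategy φ)) (n : ℕ) : Reachable φ (segN δ (2 * n)) := by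
  induction n with
  | zero => exact fun τ => ⟨τ, fun _ _ => rfl, rfl⟩
  | succ n ih =>
    have hmove := ih.exists_move hφ (by simp)
    have hI : δ (2 * n) = hmove.choose := by rw [hσ n, reachingStrategy, dif_pos hmove]
    obtain ⟨b, hb⟩ := hδ.exists_bool n
    rw [Nat.mul_succ, segN_add_two, hI, hb]
    exact hmove.choose_spec b

lemma mem_closure_range_of_obeysI (hφ : ∀ τ, ObeysII (φ τ) τ) {δ : ℕ → ℕ} (hδ : MemOmegaTwo δ)
    (hσ : ObeysI δ (reachingStrategy φ)) : δ ∈ closure (Set.range φ) := by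
  refine mem_closure_iff_forall_cylinder.mpr fun n => ?_
  obtain ⟨τ, hτ⟩ := (reachable_segN_of_obeysI hφ hδ hσ n).exists_segN_eq
  rw [length_segN] at hτ
  exact ⟨φ τ, cylinder_anti δ (Nat.le_mul_of_pos_left n two_pos)
    (segN_eq_segN_iff_mem_cylinder.mp hτ), τ, rfl⟩

end WeakIDeterminacy

/-- Intuitionistic Determinacy Theorem, weak I-determinacy of arbitrary sets
(Theorem 9.6(iii), classically valid form). -/
theorem weak_I_determinacy (X : Set (ℕ → ℕ))
    (h : ∃ φ : (List ℕ → Bool) → (ℕ → ℕ), Continuous φ ∧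
      ∀ τ : List ℕ → Bool, MemOmegaTwo (φ τ) ∧ ObeysII (φ τ) τ ∧ φ τ ∈ X) :
    ∃ σ : List ℕ → ℕ, ∀ δ : ℕ → ℕ,
      MemOmegaTwo δ → ObeysI δ σ → δ ∈ X := by
  obtain ⟨φ, hφc, hφ⟩ := h
  refine ⟨WeakIDeterminacy.reachingStrategy φ, fun δ hδ hσ => ?_⟩
  have hclosed : IsClosed (Set.range φ) := (isCompact_range hφc).isClosed
  obtain ⟨τ, rfl⟩ := hclosed.closure_subset
    (WeakIDeterminacy.mem_closure_range_of_obeysI (fun τ => (hφ τ).2.1) hδ hσ)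
  exact (hφ τ).2.2
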